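/- arXiv:1910.14302 — 2 statements merged into one kernel-verified Lean document; each statement's English description precedes it below -/
import Mathlib

section
/- Let p ≥ 0 and let v_0, …, v_p ∈ M be pairwise orthogonal vectors for Q (i.e. the polar form of Q vanishes on each pair of distinct vectors v_i, v_j). Then in the Clifford algebra CliffordAlgebra Q one has ∑_{j=0}^{p} (−1)^j (ι v_0 * ⋯ * ι v_{j−1} * ι v_{j+1} * ⋯ * ι v_p) * ι v_j = (−1)^p (p+1) · (ι v_0 * ι v_1 * ⋯ * ι v_p), where the parenthesized product omits the factor ι v_j and all products are taken in increasing order of indices. (This is the algebraic identity underlying the computation of the exterior derivatives dω_p of the spinorial p-forms in the paper.) -/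
private lemma prod_mul_anticomm {A : Type*} [Ring A] (x : A) :
    ∀ (L : List A), (∀ a ∈ L, a * x = -(x * a)) →
      L.prod * x = (-1) ^ L.length * (x * L.prod)
  | [], _ => by simp
  | a :: L, h => by
    have ih := prod_mul_anticomm x L (fun b hb => h b (List.mem_cons_of_mem _ hb))
    have ha := h a List.mem_cons_self
    have c : a * (-1 : A) ^ L.length = (-1) ^ L.length * a :=
      (((Commute.neg_one_left a).pow_left L.length).eq).symm
    simp only [List.prod_cons, List.length_cons, pow_succ]
    rw [mul_assoc, ih, ← mul_assoc a, c, mul_assoc, ← mul_assoc a x, ha]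
    simp [mul_assoc, mul_neg, neg_mul]

/-- For pairwise orthogonal vectors `v 0, …, v p` (orthogonal for the quadratic form `Q`,
i.e. the polar form vanishes), in the Clifford algebra one has
`∑_{j=0}^{p} (−1)^j (ι v_0 ⋯ \hat{ι v_j} ⋯ ι v_p) * ι v_j = (−1)^p (p+1) • (ι v_0 ⋯ ι v_p)`,
where the hat denotes omission and products are taken in increasing order of indices. -/
theorem clifford_sum_erase_mul_right
    {R M : Type*} [CommRing R] [AddCommGroup M] [Module R M]
    (Q : QuadraticForm R M) (p : ℕ) (v : Fin (p + 1) → M)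
    (horth : ∀ i j, i ≠ j → Q (v i + v j) - Q (v i) - Q (v j) = 0) :
    ∑ j : Fin (p + 1), (-1 : CliffordAlgebra Q) ^ (j : ℕ) *
        (((List.ofFn fun i => CliffordAlgebra.ι Q (v i)).eraseIdx (j : ℕ)).prod *
          CliffordAlgebra.ι Q (v j))
      = (-1 : CliffordAlgebra Q) ^ p *
          ((p + 1) • (List.ofFn fun i => CliffordAlgebra.ι Q (v i)).prod) := by
  set l : List (CliffordAlgebra Q) := List.ofFn fun i => CliffordAlgebra.ι Q (v i) with hl
  have hlen : l.length = p + 1 := by simp [hl]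
  have key : ∀ j : Fin (p + 1),
      (-1 : CliffordAlgebra Q) ^ (j : ℕ) * ((l.eraseIdx (j : ℕ)).prod *
        CliffordAlgebra.ι Q (v j)) = (-1) ^ p * l.prod := by
    intro j
    have hj : (j : ℕ) < l.length := by rw [hlen]; exact j.2
    set x := CliffordAlgebra.ι Q (v j) with hx
    have hdecomp : l = l.take (j : ℕ) ++ x :: l.drop ((j : ℕ) + 1) := by
      conv_lhs => rw [← List.take_append_drop (j : ℕ) l]
      rw [List.drop_eq_getElem_cons hj]
      congr 2
      rw [List.getElem_of_eq hl, List.getElem_ofFn]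
    have herase : l.eraseIdx (j : ℕ) = l.take (j : ℕ) ++ l.drop ((j : ℕ) + 1) :=
      List.eraseIdx_eq_take_drop_succ l _
    have hanti : ∀ a ∈ l.drop ((j : ℕ) + 1), a * x = -(x * a) := by
      intro a ha
      obtain ⟨i, hi, rfl⟩ := List.mem_iff_getElem.mp ha
      have hilen : (j : ℕ) + 1 + i < l.length := by
        have := hi; simp only [List.length_drop] at this; omega
      have hilen' : (j : ℕ) + 1 + i < p + 1 := by omega
      rw [List.getElem_drop]
      have hval : l[(j:ℕ)+1+i] = CliffordAlgebra.ι Q (v ⟨(j:ℕ)+1+i, hilen'⟩) := by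
        rw [List.getElem_of_eq hl, List.getElem_ofFn]
      rw [hval, hx]
      have hne : (⟨(j:ℕ)+1+i, hilen'⟩ : Fin (p+1)) ≠ j := by
        intro h
        have := congrArg Fin.val h
        simp only at this
        omega
      have horto : Q.IsOrtho (v ⟨(j:ℕ)+1+i, hilen'⟩) (v j) := by
        rw [QuadraticMap.isOrtho_def]
        linear_combination horth _ _ hne
      exact CliffordAlgebra.ι_mul_ι_comm_of_isOrtho horto
    have hdlen : (l.drop ((j : ℕ) + 1)).length = p - (j : ℕ) := by
      simp only [List.length_drop, hlen]; omega
    rw [herase, List.prod_append, mul_assoc, prod_mul_anticomm x _ hanti, hdlen,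
      ← mul_assoc (l.take (j:ℕ)).prod,
      ← ((Commute.neg_one_left (l.take (j:ℕ)).prod).pow_left (p - (j : ℕ))).eq,
      mul_assoc ((-1 : CliffordAlgebra Q) ^ (p - (j:ℕ))), ← mul_assoc, ← pow_add]
    have hexp : (j : ℕ) + (p - (j : ℕ)) = p := by omega
    rw [hexp]
    conv_rhs => rw [hdecomp]
    rw [List.prod_append, List.prod_cons]
  rw [Finset.sum_congr rfl (fun j _ => key j), Finset.sum_const, Finset.card_univ,
    Fintype.card_fin, mul_smul_comm]
end

section
/- In the flat Killing model with purely imaginary Killing constant α ∈ iℝ, for every odd p = 2k−1 ≥ 1 and all indices 1 ≤ i_0 < i_1 < … < i_{2k−1} ≤ m one has, at every point of U, ∑_{j=0}^{2k−1} (−1)^j (∂_{i_j} H) · g_{i_0 … \hat{i_j} … i_{2k−1}} = 0, where the hat denotes omission of the index i_j. -/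
open scoped ComplexConjugate

namespace FlatKillingAux

variable {V : Type*} [NormedAddCommGroup V] [InnerProductSpace ℂ V]
variable {ι : Type*}

local notation "⟪" x ", " y "⟫" => (inner ℂ x y : ℂ)

def esign : ℕ → ℂ
  | 0 => 1
  | n+1 => (-1)^(n+1) * esign n

lemma esign_succ (n : ℕ) : esign (n+1) = (-1)^(n+1) * esign n := rfl

lemma esign_even_odd (k : ℕ) : esign (2*k) = (-1)^k ∧ esign (2*k+1) = (-1)^(k+1) := by
  induction k with
  | zero => constructor <;> simp [esign]
  | succ k ih =>
    have e1 : esign (2*(k+1)) = (-1)^(k+1) := by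
      rw [show 2*(k+1) = (2*k+1)+1 by ring, esign_succ, ih.2,
        show (2*k+1)+1 = 2*(k+1) by ring, pow_mul]
      norm_num
    refine ⟨e1, ?_⟩
    rw [esign_succ, e1, show 2*(k+1)+1 = 2*(k+1)+1 by rfl,
      show ((-1:ℂ))^(2*(k+1)+1) = -1 by
        rw [pow_succ, pow_mul]; norm_num]
    ring

lemma prod_commute (A : V →ₗ[ℂ] V) (s : ℂ) (f : ι → V →ₗ[ℂ] V) :
    ∀ (M : List ι), (∀ b ∈ M, ∀ x : V, A (f b x) = s • f b (A x)) →
      ∀ x : V, A ((M.map f).prod x) = s ^ M.length • (M.map f).prod (A x) := by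
  intro M
  induction M with
  | nil => intro _ x; simp
  | cons b T ih =>
    intro h x
    simp only [List.map_cons, List.prod_cons, Module.End.mul_apply, List.length_cons]
    rw [h b (by simp) _, ih (fun c hc => h c (by simp [hc])) x, map_smul]
    rw [smul_smul, pow_succ]
    ring_nf

lemma prod_skew (f : ι → V →ₗ[ℂ] V) (M : List ι)
    (hsk : ∀ a ∈ M, ∀ x y : V, ⟪f a x, y⟫ = -⟪x, f a y⟫)
    (hanti : M.Pairwise fun a b => ∀ x : V, f a (f b x) = - f b (f a x)) :
    ∀ x y : V, ⟪(M.map f).prod x, y⟫ = esign M.length * ⟪x, (M.map f).prod y⟫ := by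
  induction M with
  | nil => intro x y; simp [esign]
  | cons a T ih =>
    rw [List.pairwise_cons] at hanti
    intro x y
    simp only [List.map_cons, List.prod_cons, Module.End.mul_apply, List.length_cons]
    have h1 : ⟪f a ((T.map f).prod x), y⟫ = -⟪(T.map f).prod x, f a y⟫ := hsk a (by simp) _ _
    have h2 := ih (fun c hc => hsk c (by simp [hc])) hanti.2 x (f a y)
    have h3 : (T.map f).prod (f a y) = ((-1:ℂ))^T.length • f a ((T.map f).prod y) := by
      have h4 := prod_commute (f a) (-1 : ℂ) f T
        (fun c hc x => by rw [hanti.1 c hc x, neg_smul, one_smul]) y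
      rw [h4, smul_smul, ← mul_pow]
      norm_num
    rw [h1, h2, h3, inner_smul_right, esign_succ]
    ring

lemma prod_pull (f : ι → V →ₗ[ℂ] V)
    (hanti : ∀ a b : ι, a ≠ b → ∀ x : V, f a (f b x) = - f b (f a x)) :
    ∀ (M : List ι), M.Nodup → ∀ (i : ℕ) (hi : i < M.length) (x : V),
      (M.map f).prod x = (-1:ℂ)^i • f (M[i]) (((M.eraseIdx i).map f).prod x) := by
  intro M
  induction M with
  | nil => intro _ i hi; simp at hi
  | cons a T ih =>
    intro hM i hi x
    rcases i with _ | i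
    · simp [List.eraseIdx_cons_zero, List.prod_cons, Module.End.mul_apply]
    · rw [List.nodup_cons] at hM
      have hiT : i < T.length := by simpa using hi
      simp only [List.map_cons, List.prod_cons, Module.End.mul_apply,
        List.eraseIdx_cons_succ, List.getElem_cons_succ]
      rw [ih hM.2 i hiT x, map_smul]
      have hne : a ≠ T[i] := fun h => hM.1 (h ▸ List.getElem_mem hiT)
      rw [hanti a (T[i]) hne]
      rw [pow_succ]
      simp [smul_smul]

lemma eraseIdx_eraseIdx : ∀ (M : List ι) (i j : ℕ), i ≤ j →
    (M.eraseIdx (j+1)).eraseIdx i = (M.eraseIdx i).eraseIdx j := by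
  intro M
  induction M with
  | nil => intro i j _; simp
  | cons a T ih =>
    intro i j hij
    rcases i with _ | i
    · simp [List.eraseIdx_cons_succ, List.eraseIdx_cons_zero]
    · rcases j with _ | j
      · omega
      · simp only [List.eraseIdx_cons_succ]
        rw [ih i j (by omega)]

lemma not_mem_eraseIdx (M : List ι) (hM : M.Nodup) (i : ℕ) (hi : i < M.length) :
    M[i] ∉ M.eraseIdx i := by
  intro h
  obtain ⟨l, hl, hval⟩ := List.mem_iff_getElem.1 h
  have hlen : (M.eraseIdx i).length = M.length - 1 := by
    rw [List.length_eraseIdx]; simp [hi]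
  rw [List.getElem_eraseIdx] at hval
  split at hval
  · exact absurd (List.Nodup.getElem_inj_iff hM |>.1 hval) (by omega)
  · exact absurd (List.Nodup.getElem_inj_iff hM |>.1 hval) (by omega)

lemma conj_inner_Nop (Nop : V →ₗ[ℂ] V) (hN : ∀ x y : V, ⟪Nop x, y⟫ = -⟪x, Nop y⟫)
    (W : V → V) (ε δ : ℂ) (hε : ∀ x y : V, ⟪W x, y⟫ = ε * ⟪x, W y⟫) (hεε : ε * ε = 1)
    (hδ : ∀ u : V, W (Nop u) = δ • Nop (W u)) (hδc : conj δ = δ) (Φ : V) :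
    conj ⟪W Φ, Nop Φ⟫ = -(ε*δ) * ⟪W Φ, Nop Φ⟫ := by
  have h1 : ⟪Nop Φ, W Φ⟫ = ε * ⟪W (Nop Φ), Φ⟫ := by
    have h := hε (Nop Φ) Φ
    calc ⟪Nop Φ, W Φ⟫ = (ε * ε) * ⟪Nop Φ, W Φ⟫ := by rw [hεε, one_mul]
    _ = ε * ⟪W (Nop Φ), Φ⟫ := by rw [h]; ring
  rw [inner_conj_symm, h1, hδ, inner_smul_left, hδc, hN]
  ring


lemma star_identity {m : ℕ} (C : Fin m → V →ₗ[ℂ] V) (Nop : V →ₗ[ℂ] V)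
    (hCskew : ∀ j, ∀ x y : V, (inner ℂ (C j x) y : ℂ) = - inner ℂ x (C j y))
    (hNskew : ∀ x y : V, (inner ℂ (Nop x) y : ℂ) = - inner ℂ x (Nop y))
    (hCC : ∀ i j, i ≠ j → (C i) ∘ₗ (C j) = - ((C j) ∘ₗ (C i)))
    (hCN : ∀ j, (C j) ∘ₗ Nop = - (Nop ∘ₗ (C j)))
    (U : Set (Fin m → ℝ)) (hU : IsOpen U)
    (φ : (Fin m → ℝ) → V) (H : (Fin m → ℝ) → ℝ)
    (hφ : ContDiffOn ℝ (⊤ : ℕ∞) φ U) (hH : ContDiffOn ℝ (⊤ : ℕ∞) H U)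
    (α : ℂ)
    (hKilling : ∀ x ∈ U, ∀ j : Fin m,
      fderiv ℝ φ x (Pi.single j 1) =
        α • C j (φ x) - ((H x : ℂ) / 2) • (C j ∘ₗ Nop) (φ x))
    (x : Fin m → ℝ) (hx : x ∈ U) :
    ∀ p q : Fin m, p ≠ q →
      ((fderiv ℝ H x (Pi.single q 1) : ℝ) : ℂ) • (C p (Nop (φ x)))
        - ((fderiv ℝ H x (Pi.single p 1) : ℝ) : ℂ) • (C q (Nop (φ x)))
      = (4*α^2) • (C p (C q (φ x))) + ((H x : ℂ))^2 • (C p (Nop (C q (Nop (φ x))))) := by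
  have hUx : U ∈ nhds x := hU.mem_nhds hx
  have hφd : ∀ y ∈ U, HasFDerivAt φ (fderiv ℝ φ y) y := fun y hy =>
    (((hφ.contDiffAt (hU.mem_nhds hy)).differentiableAt (by simp))).hasFDerivAt
  have hHd : HasFDerivAt H (fderiv ℝ H x) x :=
    ((hH.contDiffAt hUx).differentiableAt (by simp)).hasFDerivAt
  have hf'' : HasFDerivAt (fderiv ℝ φ) (fderiv ℝ (fderiv ℝ φ) x) x :=
    (((hφ.contDiffAt hUx).fderiv_right (m := (⊤ : ℕ∞)) (by simp)).differentiableAt (by simp)).hasFDerivAt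
  have hsymm : ∀ u w, fderiv ℝ (fderiv ℝ φ) x u w = fderiv ℝ (fderiv ℝ φ) x w u :=
    second_derivative_symmetric_of_eventually (Filter.eventually_of_mem hUx hφd) hf''
  -- pointwise operator facts
  have hNC : ∀ r : Fin m, ∀ a : V, Nop (C r a) = -(C r (Nop a)) := by
    intro r a
    have h := LinearMap.congr_fun (hCN r) a
    simp only [LinearMap.comp_apply, LinearMap.neg_apply] at h
    rw [h, neg_neg]
  have hγskew : ∀ r : Fin m, ∀ a b : V, ⟪C r (Nop a), b⟫ = -⟪a, C r (Nop b)⟫ := by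
    intro r a b
    rw [hCskew r (Nop a) b, hNskew a (C r b), hNC r b]
    simp
  intro p q hpq
  -- the main scalar computation
  have hstep : ∀ (c : V) (j i : Fin m),
      ⟪c, fderiv ℝ (fderiv ℝ φ) x (Pi.single i 1) (Pi.single j 1)⟫ =
        α^2 * ⟪c, C j (C i (φ x))⟫
        - (((fderiv ℝ H x (Pi.single i 1) : ℝ) : ℂ)/2) * ⟪c, C j (Nop (φ x))⟫
        + (((H x : ℂ))^2/4) * ⟪c, C j (Nop (C i (Nop (φ x))))⟫ := by
    intro c j i
    have hP1 : HasFDerivAt (fun y => ⟪c, fderiv ℝ φ y (Pi.single j 1)⟫)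
        (((innerSL ℂ c).restrictScalars ℝ).comp
          ((ContinuousLinearMap.apply ℝ V (Pi.single j 1)).comp (fderiv ℝ (fderiv ℝ φ) x))) x := by
      have h1 := (ContinuousLinearMap.apply ℝ V (Pi.single j 1)).hasFDerivAt.comp x hf''
      exact ((innerSL ℂ c).restrictScalars ℝ).hasFDerivAt.comp x h1
    have hq1 : ∀ d : V, HasFDerivAt (fun y => ⟪d, φ y⟫)
        (((innerSL ℂ d).restrictScalars ℝ).comp (fderiv ℝ φ x)) x := fun d =>
      ((innerSL ℂ d).restrictScalars ℝ).hasFDerivAt.comp x (hφd x hx)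
    have hq2 : HasFDerivAt (fun y => ((H y : ℝ) : ℂ)) (Complex.ofRealCLM.comp (fderiv ℝ H x)) x :=
      Complex.ofRealCLM.hasFDerivAt.comp x hHd
    have hQd := ((hq1 (C j c)).const_mul (-α)).add
      ((hq2.mul (hq1 (C j (Nop c)))).const_mul (1/2 : ℂ))
    have hEq : (fun y => ⟪c, fderiv ℝ φ y (Pi.single j 1)⟫) =ᶠ[nhds x]
        (fun y => -α * ⟪C j c, φ y⟫ + (1/2 : ℂ) * (((H y : ℝ):ℂ) * ⟪C j (Nop c), φ y⟫)) := by
      filter_upwards [hUx] with y hy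
      rw [hKilling y hy j]
      simp only [inner_sub_right, inner_smul_right, LinearMap.comp_apply]
      have e1 : ⟪c, C j (φ y)⟫ = -⟪C j c, φ y⟫ := by
        linear_combination hCskew j c (φ y)
      have e2 : ⟪c, C j (Nop (φ y))⟫ = -⟪C j (Nop c), φ y⟫ := by
        linear_combination hγskew j c (φ y)
      rw [e1, e2]
      ring
    have hP2 := hQd.congr_of_eventuallyEq hEq
    have huniq := hP1.unique hP2
    have hval := DFunLike.congr_fun huniq (Pi.single i 1)
    simp only [ContinuousLinearMap.coe_comp', Function.comp_apply,
      ContinuousLinearMap.apply_apply, ContinuousLinearMap.coe_restrictScalars',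
      innerSL_apply_apply, ContinuousLinearMap.add_apply, ContinuousLinearMap.coe_smul',
      Pi.smul_apply, smul_eq_mul, Complex.ofRealCLM_apply] at hval
    rw [hKilling x hx i] at hval
    simp only [inner_sub_right, inner_smul_right, LinearMap.comp_apply] at hval
    -- move operators back to the right slot
    have e3 : ⟪C j c, C i (φ x)⟫ = -⟪c, C j (C i (φ x))⟫ := hCskew j c _
    have e4 : ⟪C j c, C i (Nop (φ x))⟫ = -⟪c, C j (C i (Nop (φ x)))⟫ := hCskew j c _
    have e5 : ⟪C j (Nop c), φ x⟫ = -⟪c, C j (Nop (φ x))⟫ := hγskew j c _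
    have e6 : ⟪C j (Nop c), C i (φ x)⟫ = -⟪c, C j (Nop (C i (φ x)))⟫ := hγskew j c _
    have e7 : ⟪C j (Nop c), C i (Nop (φ x))⟫ = -⟪c, C j (Nop (C i (Nop (φ x))))⟫ := hγskew j c _
    have hcross : ⟪c, C j (C i (Nop (φ x)))⟫ + ⟪c, C j (Nop (C i (φ x)))⟫ = 0 := by
      have : Nop (C i (φ x)) = -(C i (Nop (φ x))) := hNC i _
      rw [this, map_neg, inner_neg_right]
      ring
    rw [e3, e4, e5, e6, e7] at hval
    rw [hval]
    linear_combination (-(α * ((H x : ℂ)))/2) * hcross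
  -- assemble
  apply ext_inner_left ℂ
  intro c
  have h1 := hstep c q p
  have h2 := hstep c p q
  have hsy : ⟪c, fderiv ℝ (fderiv ℝ φ) x (Pi.single p 1) (Pi.single q 1)⟫ =
      ⟪c, fderiv ℝ (fderiv ℝ φ) x (Pi.single q 1) (Pi.single p 1)⟫ := by
    rw [hsymm (Pi.single p 1) (Pi.single q 1)]
  -- anticommutation relations pointwise
  have hCCpt : C q (C p (φ x)) = -(C p (C q (φ x))) := by
    have h := LinearMap.congr_fun (hCC q p (Ne.symm hpq)) (φ x)
    simpa using h
  have hγγpt : C q (Nop (C p (Nop (φ x)))) = -(C p (Nop (C q (Nop (φ x))))) := by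
    have h1' : Nop (C p (Nop (φ x))) = -(C p (Nop (Nop (φ x)))) := hNC p _
    have h2' : Nop (C q (Nop (φ x))) = -(C q (Nop (Nop (φ x)))) := hNC q _
    have h := LinearMap.congr_fun (hCC q p (Ne.symm hpq)) (Nop (Nop (φ x)))
    simp only [LinearMap.comp_apply, LinearMap.neg_apply] at h
    rw [h1', h2']
    simp only [map_neg, h, neg_neg]
  rw [h1, h2, hCCpt, hγγpt, inner_neg_right, inner_neg_right] at hsy
  simp only [inner_add_right, inner_sub_right, inner_smul_right]
  linear_combination (2 : ℂ) * hsy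


lemma smul_flip_neg_one_pow {n : ℕ} {u w : V} (h : u = (-1:ℂ)^n • w) :
    w = (-1:ℂ)^n • u := by
  rw [h, smul_smul, ← mul_pow]
  norm_num

lemma esign_sq (n : ℕ) : esign n * esign n = 1 := by
  induction n with
  | zero => simp [esign]
  | succ n ih =>
    rw [esign_succ]
    calc ((-1:ℂ)^(n+1) * esign n) * ((-1)^(n+1) * esign n)
        = ((-1:ℂ)*(-1))^(n+1) * (esign n * esign n) := by rw [mul_pow]; ring
      _ = 1 := by rw [ih]; norm_num

lemma conj_neg_one_pow (t : ℕ) : (starRingEnd ℂ) ((-1:ℂ)^t) = (-1:ℂ)^t := by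
  rw [map_pow, map_neg, map_one]

lemma neg_one_pow_two_mul (t : ℕ) : (-1:ℂ)^(2*t) = 1 := by
  rw [pow_mul]; norm_num

lemma neg_one_pow_two_mul_add_one (t : ℕ) : (-1:ℂ)^(2*t+1) = -1 := by
  rw [pow_succ, neg_one_pow_two_mul]; norm_num

lemma core {m k : ℕ} (hk : 1 ≤ k) (C : Fin m → V →ₗ[ℂ] V) (Nop : V →ₗ[ℂ] V)
    (hCskew : ∀ j, ∀ x y : V, (inner ℂ (C j x) y : ℂ) = - inner ℂ x (C j y))
    (hNskew : ∀ x y : V, (inner ℂ (Nop x) y : ℂ) = - inner ℂ x (Nop y))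
    (hCC : ∀ i j, i ≠ j → (C i) ∘ₗ (C j) = - ((C j) ∘ₗ (C i)))
    (hCN : ∀ j, (C j) ∘ₗ Nop = - (Nop ∘ₗ (C j)))
    (v : Fin (2*k) → Fin m) (hv : StrictMono v) (Φ : V)
    (dH : Fin (2*k) → ℝ) (αsq : ℂ) (Hx : ℝ) (hαsqc : (starRingEnd ℂ) αsq = αsq)
    (hstar : ∀ i j : Fin (2*k), i ≠ j →
      ((dH j : ℝ) : ℂ) • (C (v i) (Nop Φ)) - ((dH i : ℝ) : ℂ) • (C (v j) (Nop Φ))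
        = αsq • (C (v i) (C (v j) Φ)) + ((Hx : ℝ) : ℂ) • (C (v i) (Nop (C (v j) (Nop Φ))))) :
    ∑ j : Fin (2*k), (-1:ℂ)^(j:ℕ) * ((dH j : ℝ) : ℂ) *
      (inner ℂ ((((List.ofFn v).eraseIdx (j:ℕ)).map fun i => C i ∘ₗ Nop).prod Φ) (Nop Φ) : ℂ)
      = 0 := by
  classical
  set γf : Fin m → (V →ₗ[ℂ] V) := fun i => C i ∘ₗ Nop with hγf
  set L : List (Fin m) := List.ofFn v with hL
  have hLlen : L.length = 2*k := by rw [hL, List.length_ofFn]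
  have hLnd : L.Nodup := by rw [hL]; exact List.nodup_ofFn.2 hv.injective
  -- pointwise operator facts
  have hNC : ∀ r : Fin m, ∀ a : V, Nop (C r a) = -(C r (Nop a)) := by
    intro r a
    have h := LinearMap.congr_fun (hCN r) a
    simp only [LinearMap.comp_apply, LinearMap.neg_apply] at h
    rw [h, neg_neg]
  have hCNpt : ∀ r : Fin m, ∀ a : V, C r (Nop a) = -(Nop (C r a)) := by
    intro r a; rw [hNC, neg_neg]
  have hCCpt : ∀ p q : Fin m, p ≠ q → ∀ u : V, C p (C q u) = -(C q (C p u)) := by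
    intro p q hpq u
    have h := LinearMap.congr_fun (hCC p q hpq) u
    simpa using h
  have hγskew : ∀ r : Fin m, ∀ a b : V, ⟪γf r a, b⟫ = -⟪a, γf r b⟫ := by
    intro r a b
    simp only [hγf, LinearMap.comp_apply]
    rw [hCskew r (Nop a) b, hNskew a (C r b), hNC r b]
    simp
  have hγanti : ∀ p q : Fin m, p ≠ q → ∀ u : V, γf p (γf q u) = -(γf q (γf p u)) := by
    intro p q hpq u
    have h := LinearMap.congr_fun (hCC p q hpq) (Nop (Nop u))
    simp only [LinearMap.comp_apply, LinearMap.neg_apply] at h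
    simp only [hγf, LinearMap.comp_apply, hNC, map_neg, neg_neg, h]
  have hγN : ∀ r : Fin m, ∀ u : V, Nop (γf r u) = (-1:ℂ) • γf r (Nop u) := by
    intro r u
    simp only [hγf, LinearMap.comp_apply]
    rw [hNC r (Nop u)]
    simp
  have hCγcomm : ∀ r s : Fin m, r ≠ s → ∀ u : V, C r (γf s u) = (1:ℂ) • γf s (C r u) := by
    intro r s hrs u
    have h := hCCpt r s hrs (Nop u)
    simp only [hγf, LinearMap.comp_apply, hNC, map_neg, h, neg_neg, one_smul]
  -- abbreviations
  set gg : List (Fin m) → ℂ := fun M => (inner ℂ ((M.map γf).prod Φ) (Nop Φ) : ℂ) with hgg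
  set F : Fin (2*k) → ℂ := fun j => (-1:ℂ)^(j:ℕ) * ((dH j : ℝ) : ℂ) * gg (L.eraseIdx (j:ℕ)) with hF
  set Xf : Fin (2*k) → Fin (2*k) → ℂ := fun i j =>
    (inner ℂ ((((L.eraseIdx (j:ℕ)).eraseIdx (i:ℕ)).map γf).prod (C (v j) (C (v i) Φ))) (Nop Φ) : ℂ)
    with hXf
  set X' : Fin (2*k) → Fin (2*k) → ℂ := fun i j =>
    if (i:ℕ) < (j:ℕ) then Xf i j else Xf j i with hX'
  set K : Fin (2*k) → Fin (2*k) → ℂ := fun i j =>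
    -(αsq * (-1:ℂ)^((i:ℕ)+(j:ℕ)) * X' i j) - ((Hx:ℝ):ℂ) * gg L with hK
  have goalF : (∑ j : Fin (2*k), (-1:ℂ)^(j:ℕ) * ((dH j : ℝ) : ℂ) *
      (inner ℂ (((L.eraseIdx (j:ℕ)).map γf).prod Φ) (Nop Φ) : ℂ)) = ∑ j, F j :=
    Finset.sum_congr rfl (fun j _ => by rw [hF])
  rw [goalF]
  -- generic length facts
  have hlenE : ∀ j : Fin (2*k), (L.eraseIdx (j:ℕ)).length = 2*k - 1 := by
    intro j
    rw [List.length_eraseIdx, if_pos (by rw [hLlen]; exact j.isLt), hLlen]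
  have hndE : ∀ j : Fin (2*k), (L.eraseIdx (j:ℕ)).Nodup := fun j =>
    List.Nodup.sublist (List.eraseIdx_sublist _ _) hLnd
  have key : ∀ i j : Fin (2*k), (i:ℕ) < (j:ℕ) → F j + F i = K i j := by
    intro i j hij
    have hjk := j.isLt
    have hjL : (j:ℕ) < L.length := by rw [hLlen]; exact j.isLt
    have hiL : (i:ℕ) < L.length := by rw [hLlen]; exact i.isLt
    obtain ⟨jj, hjj⟩ : ∃ t, (j:ℕ) = t + 1 := ⟨(j:ℕ) - 1, by omega⟩
    have hvinj : v i ≠ v j := by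
      intro h
      exact absurd (congrArg Fin.val (hv.injective h)) (by omega)
    have hiM : (i:ℕ) < (L.eraseIdx (j:ℕ)).length := by rw [hlenE j]; omega
    have hjjM : jj < (L.eraseIdx (i:ℕ)).length := by rw [hlenE i]; omega
    have hMnd := hndE j
    have hM'nd := hndE i
    have hgetM : (L.eraseIdx (j:ℕ))[(i:ℕ)]'hiM = v i := by
      rw [List.getElem_eraseIdx, dif_pos hij]
      simp only [hL, List.getElem_ofFn]
    have hgetM' : (L.eraseIdx (i:ℕ))[jj]'hjjM = v j := by
      rw [List.getElem_eraseIdx, dif_neg (by omega)]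
      simp only [hL, List.getElem_ofFn]
      exact congrArg v (Fin.ext (by simp [hjj]))
    have hDD : (L.eraseIdx (i:ℕ)).eraseIdx jj = (L.eraseIdx (j:ℕ)).eraseIdx (i:ℕ) := by
      rw [hjj]
      exact (eraseIdx_eraseIdx L (i:ℕ) jj (by omega)).symm
    have hviD : v i ∉ (L.eraseIdx (j:ℕ)).eraseIdx (i:ℕ) := by
      have h := not_mem_eraseIdx (L.eraseIdx (j:ℕ)) hMnd (i:ℕ) hiM
      rwa [hgetM] at h
    have hLj : L[(j:ℕ)]'hjL = v j := by
      simp only [hL, List.getElem_ofFn]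
    have hvjM : v j ∉ L.eraseIdx (j:ℕ) := by
      have h := not_mem_eraseIdx L hLnd (j:ℕ) hjL
      rwa [hLj] at h
    have hvjD : v j ∉ (L.eraseIdx (j:ℕ)).eraseIdx (i:ℕ) :=
      fun h => hvjM ((List.eraseIdx_sublist _ _).subset h)
    have hDlen : ((L.eraseIdx (j:ℕ)).eraseIdx (i:ℕ)).length = 2*k-2 := by
      rw [List.length_eraseIdx, if_pos hiM, hlenE j]
      omega
    have hDeven : (-1:ℂ)^(((L.eraseIdx (j:ℕ)).eraseIdx (i:ℕ)).length) = 1 := by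
      rw [hDlen, show 2*k-2 = 2*(k-1) by omega, neg_one_pow_two_mul]
    have hcommI : ∀ u : V, γf (v i) ((((L.eraseIdx (j:ℕ)).eraseIdx (i:ℕ)).map γf).prod u)
        = (((L.eraseIdx (j:ℕ)).eraseIdx (i:ℕ)).map γf).prod (γf (v i) u) := by
      intro u
      have h := prod_commute (γf (v i)) (-1:ℂ) γf ((L.eraseIdx (j:ℕ)).eraseIdx (i:ℕ))
        (fun b hb u' => by
          rw [hγanti (v i) b (fun he => hviD (by rw [he]; exact hb)) u']; simp) u
      rw [h, hDeven, one_smul]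
    have hcommJ : ∀ u : V, γf (v j) ((((L.eraseIdx (j:ℕ)).eraseIdx (i:ℕ)).map γf).prod u)
        = (((L.eraseIdx (j:ℕ)).eraseIdx (i:ℕ)).map γf).prod (γf (v j) u) := by
      intro u
      have h := prod_commute (γf (v j)) (-1:ℂ) γf ((L.eraseIdx (j:ℕ)).eraseIdx (i:ℕ))
        (fun b hb u' => by
          rw [hγanti (v j) b (fun he => hvjD (by rw [he]; exact hb)) u']; simp) u
      rw [h, hDeven, one_smul]
    have hpull1 : ((L.eraseIdx (j:ℕ)).map γf).prod Φ
        = (-1:ℂ)^(i:ℕ) • γf (v i) ((((L.eraseIdx (j:ℕ)).eraseIdx (i:ℕ)).map γf).prod Φ) := by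
      have h := prod_pull γf hγanti (L.eraseIdx (j:ℕ)) hMnd (i:ℕ) hiM Φ
      rwa [hgetM] at h
    have hpull2 : ((L.eraseIdx (i:ℕ)).map γf).prod Φ
        = (-1:ℂ)^jj • γf (v j) ((((L.eraseIdx (j:ℕ)).eraseIdx (i:ℕ)).map γf).prod Φ) := by
      have h := prod_pull γf hγanti (L.eraseIdx (i:ℕ)) hM'nd jj hjjM Φ
      rwa [hgetM', hDD] at h
    have hLi : L[(i:ℕ)]'hiL = v i := by
      simp only [hL, List.getElem_ofFn]
    have hpullL : (L.map γf).prod Φ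
        = (-1:ℂ)^((i:ℕ)+jj) •
          (((L.eraseIdx (j:ℕ)).eraseIdx (i:ℕ)).map γf).prod (γf (v i) (γf (v j) Φ)) := by
      have h1 := prod_pull γf hγanti L hLnd (i:ℕ) hiL Φ
      rw [hLi, hpull2, map_smul, hcommJ Φ, hcommI (γf (v j) Φ)] at h1
      rw [h1, smul_smul, ← pow_add]
    have hs := hstar i j (fun h => absurd (congrArg Fin.val h) (by omega))
    have happ := congrArg (fun w : V =>
      (inner ℂ ((((L.eraseIdx (j:ℕ)).eraseIdx (i:ℕ)).map γf).prod w) (Nop Φ) : ℂ)) hs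
    simp only [map_sub, map_add, map_smul, inner_sub_left, inner_add_left, inner_smul_left,
      Complex.conj_ofReal, hαsqc] at happ
    have hccp : C (v i) (C (v j) Φ) = -(C (v j) (C (v i) Φ)) := hCCpt (v i) (v j) hvinj Φ
    rw [hccp, map_neg, inner_neg_left] at happ
    simp only [hF, hK, hX', if_pos hij, hXf, hgg]
    rw [hpull1, hpull2, hcommI Φ, hcommJ Φ, hpullL]
    rw [inner_smul_left, inner_smul_left, inner_smul_left,
      conj_neg_one_pow, conj_neg_one_pow, conj_neg_one_pow]
    simp only [hγf, LinearMap.comp_apply] at happ ⊢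
    rw [hjj] at happ ⊢
    linear_combination ((-1:ℂ)^((i:ℕ)+jj+1)) * happ
  -- symmetry of K
  have ksymm : ∀ i j : Fin (2*k), K i j = K j i := by
    intro i j
    rcases Nat.lt_trichotomy (i:ℕ) (j:ℕ) with h | h | h
    · simp only [hK, hX']
      rw [if_pos h, if_neg (by omega), Nat.add_comm]
    · have hij : i = j := Fin.ext h
      subst hij; rfl
    · simp only [hK, hX']
      rw [if_neg (by omega), if_pos h, Nat.add_comm]
  have key' : ∀ i j : Fin (2*k), i ≠ j → F j + F i = K i j := by
    intro i j hij
    rcases Nat.lt_trichotomy (i:ℕ) (j:ℕ) with h | h | h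
    · exact key i j h
    · exact absurd (Fin.ext h) hij
    · rw [ksymm, add_comm]; exact key j i h
  -- conjugation facts
  have hconjgg : ∀ (M : List (Fin m)), M.Nodup →
      (starRingEnd ℂ) (gg M) = -(esign M.length * (-1:ℂ)^M.length) * gg M := by
    intro M hM
    simp only [hgg]
    refine conj_inner_Nop Nop hNskew (fun u => ((M.map γf).prod) u)
      (esign M.length) ((-1:ℂ)^M.length)
      (prod_skew γf M (fun a _ x y => hγskew a x y)
        (List.Pairwise.imp (fun hne u => hγanti _ _ hne u) hM))
      (esign_sq _) (fun u => ?_) (conj_neg_one_pow _) Φ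
    exact smul_flip_neg_one_pow (prod_commute Nop (-1:ℂ) γf M (fun b _ u' => hγN b u') u)
  have hcggE : ∀ j : Fin (2*k), (starRingEnd ℂ) (gg (L.eraseIdx (j:ℕ))) =
      (-1:ℂ)^k * gg (L.eraseIdx (j:ℕ)) := by
    intro j
    rw [hconjgg _ (hndE j), hlenE j]
    have h1 : 2*k - 1 = 2*(k-1)+1 := by omega
    rw [h1, (esign_even_odd (k-1)).2, neg_one_pow_two_mul_add_one]
    have h2 : (k-1)+1 = k := by omega
    rw [h2]; ring
  have hcggL : (starRingEnd ℂ) (gg L) = -((-1:ℂ)^k) * gg L := by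
    rw [hconjgg L hLnd, hLlen, (esign_even_odd k).1, neg_one_pow_two_mul]
    ring
  have hcX : ∀ i j : Fin (2*k), i ≠ j →
      (starRingEnd ℂ) (X' i j) = -((-1:ℂ)^k) * X' i j := by
    have main : ∀ i j : Fin (2*k), (i:ℕ) < (j:ℕ) →
        (starRingEnd ℂ) (Xf i j) = -((-1:ℂ)^k) * Xf i j := by
      intro i j hij
      have hjk := j.isLt
      have hjL : (j:ℕ) < L.length := by rw [hLlen]; exact j.isLt
      have hvinj : v i ≠ v j := by
        intro h
        exact absurd (congrArg Fin.val (hv.injective h)) (by omega)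
      have hiM : (i:ℕ) < (L.eraseIdx (j:ℕ)).length := by rw [hlenE j]; omega
      have hMnd := hndE j
      have hgetM : (L.eraseIdx (j:ℕ))[(i:ℕ)]'hiM = v i := by
        rw [List.getElem_eraseIdx, dif_pos hij]
        simp only [hL, List.getElem_ofFn]
      have hviD : v i ∉ (L.eraseIdx (j:ℕ)).eraseIdx (i:ℕ) := by
        have h := not_mem_eraseIdx (L.eraseIdx (j:ℕ)) hMnd (i:ℕ) hiM
        rwa [hgetM] at h
      have hLj : L[(j:ℕ)]'hjL = v j := by
        simp only [hL, List.getElem_ofFn]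
      have hvjM : v j ∉ L.eraseIdx (j:ℕ) := by
        have h := not_mem_eraseIdx L hLnd (j:ℕ) hjL
        rwa [hLj] at h
      have hvjD : v j ∉ (L.eraseIdx (j:ℕ)).eraseIdx (i:ℕ) :=
        fun h => hvjM ((List.eraseIdx_sublist _ _).subset h)
      have hDnd : ((L.eraseIdx (j:ℕ)).eraseIdx (i:ℕ)).Nodup :=
        List.Nodup.sublist (List.eraseIdx_sublist _ _) hMnd
      have hDlen : ((L.eraseIdx (j:ℕ)).eraseIdx (i:ℕ)).length = 2*k-2 := by
        rw [List.length_eraseIdx, if_pos hiM, hlenE j]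
        omega
      have hDeven : (-1:ℂ)^(((L.eraseIdx (j:ℕ)).eraseIdx (i:ℕ)).length) = 1 := by
        rw [hDlen, show 2*k-2 = 2*(k-1) by omega, neg_one_pow_two_mul]
      have hcomCI : ∀ u : V, C (v i) ((((L.eraseIdx (j:ℕ)).eraseIdx (i:ℕ)).map γf).prod u)
          = (((L.eraseIdx (j:ℕ)).eraseIdx (i:ℕ)).map γf).prod (C (v i) u) := by
        intro u
        have h := prod_commute (C (v i)) (1:ℂ) γf ((L.eraseIdx (j:ℕ)).eraseIdx (i:ℕ))
          (fun b hb u' => hCγcomm (v i) b (fun he => hviD (by rw [he]; exact hb)) u') u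
        rw [h, one_pow, one_smul]
      have hcomCJ : ∀ u : V, C (v j) ((((L.eraseIdx (j:ℕ)).eraseIdx (i:ℕ)).map γf).prod u)
          = (((L.eraseIdx (j:ℕ)).eraseIdx (i:ℕ)).map γf).prod (C (v j) u) := by
        intro u
        have h := prod_commute (C (v j)) (1:ℂ) γf ((L.eraseIdx (j:ℕ)).eraseIdx (i:ℕ))
          (fun b hb u' => hCγcomm (v j) b (fun he => hvjD (by rw [he]; exact hb)) u') u
        rw [h, one_pow, one_smul]
      have hNcomm : ∀ u : V, (((L.eraseIdx (j:ℕ)).eraseIdx (i:ℕ)).map γf).prod (Nop u)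
          = Nop ((((L.eraseIdx (j:ℕ)).eraseIdx (i:ℕ)).map γf).prod u) := by
        intro u
        have h := smul_flip_neg_one_pow
          (prod_commute Nop (-1:ℂ) γf ((L.eraseIdx (j:ℕ)).eraseIdx (i:ℕ))
            (fun b _ u' => hγN b u') u)
        rw [h, hDeven, one_smul]
      have hε : ∀ x y : V,
          ⟪(((L.eraseIdx (j:ℕ)).eraseIdx (i:ℕ)).map γf).prod (C (v j) (C (v i) x)), y⟫
          = (-(esign (2*k-2))) *
            ⟪x, (((L.eraseIdx (j:ℕ)).eraseIdx (i:ℕ)).map γf).prod (C (v j) (C (v i) y))⟫ := by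
        intro x y
        have h1 := prod_skew γf ((L.eraseIdx (j:ℕ)).eraseIdx (i:ℕ))
          (fun a _ x' y' => hγskew a x' y')
          (List.Pairwise.imp (fun hne u => hγanti _ _ hne u) hDnd)
          (C (v j) (C (v i) x)) y
        rw [h1, hDlen]
        have h2 : ⟪C (v j) (C (v i) x),
            (((L.eraseIdx (j:ℕ)).eraseIdx (i:ℕ)).map γf).prod y⟫
            = ⟪x, C (v i) (C (v j) ((((L.eraseIdx (j:ℕ)).eraseIdx (i:ℕ)).map γf).prod y))⟫ := by
          rw [hCskew (v j), hCskew (v i)]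
          ring
        rw [h2, hcomCJ y, hcomCI (C (v j) y)]
        have h3 : C (v i) (C (v j) y) = -(C (v j) (C (v i) y)) := hCCpt (v i) (v j) hvinj y
        rw [h3, map_neg, inner_neg_right]
        ring
      have hδ : ∀ u : V,
          (((L.eraseIdx (j:ℕ)).eraseIdx (i:ℕ)).map γf).prod (C (v j) (C (v i) (Nop u)))
          = (1:ℂ) • Nop ((((L.eraseIdx (j:ℕ)).eraseIdx (i:ℕ)).map γf).prod (C (v j) (C (v i) u))) := by
        intro u
        rw [hCNpt (v i) u, map_neg, map_neg, hCNpt (v j) ((C (v i)) u), map_neg, neg_neg,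
          hNcomm, one_smul]
      have hfin := conj_inner_Nop Nop hNskew
        (fun u => (((L.eraseIdx (j:ℕ)).eraseIdx (i:ℕ)).map γf).prod (C (v j) (C (v i) u)))
        (-(esign (2*k-2))) 1 hε (by linear_combination esign_sq (2*k-2)) hδ (by simp) Φ
      simp only [hXf]
      rw [hfin]
      rw [show 2*k-2 = 2*(k-1) by omega, (esign_even_odd (k-1)).1,
        show ((-1:ℂ))^k = (-1)^((k-1)+1) by rw [show (k-1)+1 = k by omega], pow_succ]
      ring
    intro i j hij
    rcases Nat.lt_trichotomy (i:ℕ) (j:ℕ) with h | h | h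
    · simp only [hX', if_pos h]
      exact main i j h
    · exact absurd (Fin.ext h) hij
    · have hni : ¬((i:ℕ) < (j:ℕ)) := by omega
      simp only [hX', if_neg hni]
      exact main j i h
  have hcK : ∀ i j : Fin (2*k), i ≠ j →
      (starRingEnd ℂ) (K i j) = -((-1:ℂ)^k) * K i j := by
    intro i j hij
    simp only [hK]
    rw [map_sub, map_neg, map_mul, map_mul, map_mul, hαsqc, conj_neg_one_pow,
      hcX i j hij, hcggL, Complex.conj_ofReal]
    ring
  -- assembling the sums
  set S := ∑ j, F j with hS
  have hcS : (starRingEnd ℂ) S = (-1:ℂ)^k * S := by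
    rw [hS, map_sum, Finset.mul_sum]
    refine Finset.sum_congr rfl (fun j _ => ?_)
    simp only [hF]
    rw [map_mul, map_mul, hcggE j, conj_neg_one_pow, Complex.conj_ofReal]
    ring
  have cardE : ∀ j : Fin (2*k), (Finset.univ.erase j).card = 2*k - 1 := fun j => by
    rw [Finset.card_erase_of_mem (Finset.mem_univ j), Finset.card_univ, Fintype.card_fin]
  have E1 : ∑ j, ∑ i ∈ Finset.univ.erase j, (F j + F i) =
      ∑ j, ∑ i ∈ Finset.univ.erase j, K i j :=
    Finset.sum_congr rfl (fun j _ => Finset.sum_congr rfl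
      (fun i hi => key' i j (Finset.ne_of_mem_erase hi)))
  have E2 : ∑ j, ∑ i ∈ Finset.univ.erase j, (F j + F i) = (2*(2*(k:ℂ)) - 2) * S := by
    have h1 : ∀ j : Fin (2*k), ∑ i ∈ Finset.univ.erase j, (F j + F i)
        = ((2*k-1 : ℕ):ℂ) * F j + (S - F j) := by
      intro j
      rw [Finset.sum_add_distrib, Finset.sum_const, cardE j, nsmul_eq_mul]
      congr 1
      rw [eq_sub_iff_add_eq]
      exact Finset.sum_erase_add _ _ (Finset.mem_univ j)
    rw [Finset.sum_congr rfl (fun j _ => h1 j), Finset.sum_add_distrib,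
      Finset.sum_sub_distrib, ← Finset.mul_sum, Finset.sum_const, Finset.card_univ,
      Fintype.card_fin, nsmul_eq_mul, ← hS]
    have hc : ((2*k-1 : ℕ):ℂ) = 2*(k:ℂ) - 1 := by
      rw [Nat.cast_sub (by omega)]; push_cast; ring
    rw [hc]
    push_cast
    ring
  have E : (2*(2*(k:ℂ)) - 2) * S = ∑ j, ∑ i ∈ Finset.univ.erase j, K i j := by
    rw [← E2, E1]
  have hcRHS : (starRingEnd ℂ) (∑ j, ∑ i ∈ Finset.univ.erase j, K i j)
      = -((-1:ℂ)^k) * ∑ j, ∑ i ∈ Finset.univ.erase j, K i j := by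
    rw [map_sum, Finset.mul_sum]
    refine Finset.sum_congr rfl (fun j _ => ?_)
    rw [map_sum, Finset.mul_sum]
    exact Finset.sum_congr rfl (fun i hi => hcK i j (Finset.ne_of_mem_erase hi))
  have Econj := congrArg (starRingEnd ℂ) E
  rw [map_mul, hcS, hcRHS, ← E] at Econj
  have hconst : (starRingEnd ℂ) (2*(2*(k:ℂ)) - 2) = 2*(2*(k:ℂ)) - 2 := by
    simp [map_sub, map_mul, map_ofNat, Complex.conj_natCast]
  rw [hconst] at Econj
  -- Econj : (2*(2*k)-2) * ((-1)^k * S) = -(-1)^k * ((2*(2*k)-2) * S)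
  have hS0 : (2*(2*(k:ℂ)) - 2) * ((-1:ℂ)^k * S) = 0 := by linear_combination Econj / 2
  have hne1 : (2*(2*(k:ℂ)) - 2) ≠ 0 := by
    have : ((4*k - 2 : ℕ) : ℂ) ≠ 0 := Nat.cast_ne_zero.2 (by omega)
    have h2 : ((4*k - 2 : ℕ) : ℂ) = 2*(2*(k:ℂ)) - 2 := by
      rw [Nat.cast_sub (by omega)]; push_cast; ring
    rwa [h2] at this
  have hne2 : ((-1:ℂ)^k) ≠ 0 := pow_ne_zero _ (by norm_num)
  rcases mul_eq_zero.1 hS0 with h | h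
  · exact absurd h hne1
  · rcases mul_eq_zero.1 h with h' | h'
    · exact absurd h' hne2
    · exact h'

end FlatKillingAux


/-- Flat Killing model, purely imaginary Killing constant `α` (`α.re = 0`): for odd
`p = 2k − 1 ≥ 1` and strictly increasing indices `v 0 < … < v (2k−1)`, with
`g_{i_1…i_q} := ⟨γ_{i_1} ⋯ γ_{i_q} φ, ν·φ⟩` (`γ_j := C j ∘ Nop`), one has
`∑_{j=0}^{2k−1} (−1)^j (∂_{v j} H) g_{v 0 … \hat{v j} … v (2k−1)} = 0`, the componentwise form
of `dH ∧ η_{2k−1} = 0`. -/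
theorem flat_killing_imaginary_dH_wedge_eta
    {V : Type*} [NormedAddCommGroup V] [InnerProductSpace ℂ V]
    {m : ℕ} (C : Fin m → V →ₗ[ℂ] V) (Nop : V →ₗ[ℂ] V)
    (hCskew : ∀ j, ∀ x y : V, (inner ℂ (C j x) y : ℂ) = - inner ℂ x (C j y))
    (hNskew : ∀ x y : V, (inner ℂ (Nop x) y : ℂ) = - inner ℂ x (Nop y))
    (hCC : ∀ i j, i ≠ j → (C i) ∘ₗ (C j) = - ((C j) ∘ₗ (C i)))
    (hCN : ∀ j, (C j) ∘ₗ Nop = - (Nop ∘ₗ (C j)))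
    (U : Set (Fin m → ℝ)) (hU : IsOpen U)
    (φ : (Fin m → ℝ) → V) (H : (Fin m → ℝ) → ℝ)
    (hφ : ContDiffOn ℝ (⊤ : ℕ∞) φ U) (hH : ContDiffOn ℝ (⊤ : ℕ∞) H U)
    (α : ℂ) (hα : α.re = 0)
    (hKilling : ∀ x ∈ U, ∀ j : Fin m,
      fderiv ℝ φ x (Pi.single j 1) =
        α • C j (φ x) - ((H x : ℂ) / 2) • (C j ∘ₗ Nop) (φ x))
    (k : ℕ) (hk : 1 ≤ k) (v : Fin (2 * k) → Fin m) (hv : StrictMono v)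
    (x : Fin m → ℝ) (hx : x ∈ U) :
    ∑ j : Fin (2 * k), (-1 : ℂ) ^ (j : ℕ) *
        (fderiv ℝ H x (Pi.single (v j) 1) : ℂ) *
        (inner ℂ ((((List.ofFn v).eraseIdx (j : ℕ)).map fun i => C i ∘ₗ Nop).prod (φ x))
          (Nop (φ x)) : ℂ)
      = 0 := by
  have hstar0 := FlatKillingAux.star_identity C Nop hCskew hNskew hCC hCN U hU φ H hφ hH α
    hKilling x hx
  have hconjα : (starRingEnd ℂ) (4*α^2) = 4*α^2 := by
    have hc : (starRingEnd ℂ) α = -α := by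
      apply Complex.ext <;> simp [hα]
    rw [map_mul, map_pow, hc, map_ofNat]
    ring
  have hstar' : ∀ i j : Fin (2*k), i ≠ j →
      ((fderiv ℝ H x (Pi.single (v j) 1) : ℝ) : ℂ) • (C (v i) (Nop (φ x)))
        - ((fderiv ℝ H x (Pi.single (v i) 1) : ℝ) : ℂ) • (C (v j) (Nop (φ x)))
      = (4*α^2) • (C (v i) (C (v j) (φ x)))
        + (((H x ^ 2 : ℝ)) : ℂ) • (C (v i) (Nop (C (v j) (Nop (φ x))))) := by
    intro i j hij
    have h := hstar0 (v i) (v j) (fun h => hij (hv.injective h))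
    have hcast : (((H x ^ 2 : ℝ)) : ℂ) = ((H x : ℂ))^2 := by push_cast; ring
    rw [hcast]
    exact h
  exact FlatKillingAux.core hk C Nop hCskew hNskew hCC hCN v hv (φ x)
    (fun j => fderiv ℝ H x (Pi.single (v j) 1)) (4*α^2) (H x ^ 2) hconjα hstar'
end
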